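/- arXiv:2507.12147 — 2 statements merged into one kernel-verified Lean document; each statement's English description precedes it below -/
import Mathlib

section
/- For every μ ∈ ℂ one has the exact identities ∫₀¹ e^{2iμt} σ₂(t) (K₁e)(t) dt = ∫₀¹ e^{2iμs} σ₁(s) (∫ₛ¹ e^{2iμ(t−s)} σ₂(t) dt)² ds and e^{2iμ} ∫₀¹ e^{−2iμt} σ₁(t) (K₂e)(t) dt = ∫₀¹ e^{2iμ(1−s)} σ₂(s) (∫₀ˢ e^{2iμ(s−t)} σ₁(t) dt)² ds. Consequently, for every r ≥ 0 and every μ ∈ ℂ with Im μ > −r, both |∫₀¹ e^{2iμt} σ₂(t) (K₁e)(t) dt| and |e^{2iμ} ∫₀¹ e^{−2iμt} σ₁(t) (K₂e)(t) dt| are at most e^{2r} γ̃(μ). -/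
open MeasureTheory Set
open scoped ENNReal

noncomputable section

/-- The integral operator `K₁` associated with the Dirac system. -/
def K1 (σ₁ σ₂ : ℝ → ℂ) (μ : ℂ) (z : ℝ → ℂ) : ℝ → ℂ := fun x =>
  ∫ t in (0:ℝ)..x, σ₁ t * ∫ s in t..(1:ℝ),
    Complex.exp (2 * Complex.I * μ * (s - t)) * σ₂ s * z s

/-- The integral operator `K₂` associated with the Dirac system. -/
def K2 (σ₁ σ₂ : ℝ → ℂ) (μ : ℂ) (z : ℝ → ℂ) : ℝ → ℂ := fun x =>
  ∫ t in x..(1:ℝ), σ₂ t * ∫ s in (0:ℝ)..t,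
    Complex.exp (2 * Complex.I * μ * (t - s)) * σ₁ s * z s

/-- `γ₀₁(x,μ) = |∫₀ˣ e^{2iμ(x−t)} σ₁(t) dt|`. -/
def gamma01 (σ₁ : ℝ → ℂ) (μ : ℂ) (x : ℝ) : ℝ :=
  ‖∫ t in (0:ℝ)..x, Complex.exp (2 * Complex.I * μ * (x - t)) * σ₁ t‖

/-- `γ₀₂(x,μ) = |∫ₓ¹ e^{2iμ(t−x)} σ₂(t) dt|`. -/
def gamma02 (σ₂ : ℝ → ℂ) (μ : ℂ) (x : ℝ) : ℝ :=
  ‖∫ t in x..(1:ℝ), Complex.exp (2 * Complex.I * μ * (t - x)) * σ₂ t‖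

/-- `γ₁(μ) = ‖γ₀₁(·,μ)‖_{L^q[0,1]}`. -/
def gamma1 (σ₁ : ℝ → ℂ) (q : ℝ≥0∞) (μ : ℂ) : ℝ :=
  (eLpNorm (fun x => gamma01 σ₁ μ x) q (volume.restrict (Icc (0:ℝ) 1))).toReal

/-- `γ₂(μ) = ‖γ₀₂(·,μ)‖_{L^q[0,1]}`. -/
def gamma2 (σ₂ : ℝ → ℂ) (q : ℝ≥0∞) (μ : ℂ) : ℝ :=
  (eLpNorm (fun x => gamma02 σ₂ μ x) q (volume.restrict (Icc (0:ℝ) 1))).toReal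

/-- `γ̃(μ) = ∫₀¹ |σ₂| γ₀₁² + ∫₀¹ |σ₁| γ₀₂²`. -/
def gammaT (σ₁ σ₂ : ℝ → ℂ) (μ : ℂ) : ℝ :=
  (∫ s in (0:ℝ)..1, ‖σ₂ s‖ * (gamma01 σ₁ μ s) ^ 2)
    + ∫ s in (0:ℝ)..1, ‖σ₁ s‖ * (gamma02 σ₂ μ s) ^ 2

/-- `‖σ‖_{L^p[0,1]}` where `σ(x) = max(|σ₁(x)|,|σ₂(x)|)`. -/
def sigmaNorm (σ₁ σ₂ : ℝ → ℂ) (p : ℝ≥0∞) : ℝ :=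
  (eLpNorm (fun x => max ‖σ₁ x‖ ‖σ₂ x‖) p (volume.restrict (Icc (0:ℝ) 1))).toReal

/-- The constant function `1` on `[0,1]`. -/
def eFun : ℝ → ℂ := fun _ => 1

/-- A solution of the Dirac system `y₁' + σ₁ y₂ = iμ y₁`, `y₂' + σ₂ y₁ = −iμ y₂` on `[0,1]`,
with `y₁, y₂` absolutely continuous (i.e. in `W^{1,1}[0,1]`, so each is the indefinite
integral of an integrable function, and the equations hold a.e. with those derivatives). -/
def IsDiracSolution (σ₁ σ₂ : ℝ → ℂ) (μ : ℂ) (y₁ y₂ : ℝ → ℂ) : Prop :=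
  ∃ g₁ g₂ : ℝ → ℂ,
    IntervalIntegrable g₁ volume 0 1 ∧ IntervalIntegrable g₂ volume 0 1 ∧
    (∀ x ∈ Icc (0:ℝ) 1, y₁ x = y₁ 0 + ∫ t in (0:ℝ)..x, g₁ t) ∧
    (∀ x ∈ Icc (0:ℝ) 1, y₂ x = y₂ 0 + ∫ t in (0:ℝ)..x, g₂ t) ∧
    (∀ᵐ x ∂(volume.restrict (Icc (0:ℝ) 1)),
      g₁ x + σ₁ x * y₂ x = Complex.I * μ * y₁ x) ∧
    (∀ᵐ x ∂(volume.restrict (Icc (0:ℝ) 1)),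
      g₂ x + σ₂ x * y₁ x = -(Complex.I * μ) * y₂ x)

/-! Both identities are Fubini on the triangle `{u ≤ t}` in `[0,1]²`. After the swap, the new
inner integral `∫ᵤ¹ e^{2iμt} σ₂(t) dt` is `e^{2iμu}` times the factor `∫ᵤ¹ e^{2iμ(t-u)} σ₂(t) dt`
already present in `K₁e`, which produces the square (symmetrically for `K₂`). The bounds then
only use `|e^{2iμx}| ≤ e^{2r}` for `x ∈ [0,1]` and `Im μ > -r`. -/

theorem integral_mul_integral_swap_triangle {𝕜 : Type*} [RCLike 𝕜] {f g : ℝ → 𝕜} {a b : ℝ}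
    (hab : a ≤ b) (hf : IntervalIntegrable f volume a b) (hg : IntervalIntegrable g volume a b) :
    ∫ t in a..b, f t * ∫ u in a..t, g u = ∫ u in a..b, g u * ∫ t in u..b, f t := by
  set ν := volume.restrict (Ioc a b)
  set F : ℝ × ℝ → 𝕜 := {p : ℝ × ℝ | p.2 ≤ p.1}.indicator fun p => f p.1 * g p.2
  have hF : Integrable F (ν.prod ν) :=
    (hf.1.mul_prod hg.1).indicator (measurableSet_le measurable_snd measurable_fst)
  have inner_left : ∀ t ∈ Ioc a b, ∫ u, F (t, u) ∂ν = f t * ∫ u in a..t, g u := by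
    intro t ht
    have : (fun u => F (t, u)) = (Iic t).indicator fun u => f t * g u := by
      ext u; simp [F, indicator_apply]
    rw [this, setIntegral_indicator measurableSet_Iic, Ioc_inter_Iic, inf_eq_right.2 ht.2,
      integral_const_mul, intervalIntegral.integral_of_le ht.1.le]
  have inner_right : ∀ u ∈ Ioc a b, ∫ t, F (t, u) ∂ν = g u * ∫ t in u..b, f t := by
    intro u hu
    have : (fun t => F (t, u)) = (Ici u).indicator fun t => g u * f t := by
      ext t; simp [F, indicator_apply, mul_comm]
    have hset : Ioc a b ∩ Ici u = Icc u b := by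
      ext t; simp only [mem_inter_iff, mem_Ioc, mem_Ici, mem_Icc]
      constructor
      · rintro ⟨⟨-, htb⟩, hut⟩; exact ⟨hut, htb⟩
      · rintro ⟨hut, htb⟩; exact ⟨⟨hu.1.trans_le hut, htb⟩, hut⟩
    rw [this, setIntegral_indicator measurableSet_Ici, hset, integral_Icc_eq_integral_Ioc,
      integral_const_mul, intervalIntegral.integral_of_le hu.2]
  rw [intervalIntegral.integral_of_le hab, intervalIntegral.integral_of_le hab]
  calc ∫ t in Ioc a b, f t * ∫ u in a..t, g u
      = ∫ t, ∫ u, F (t, u) ∂ν ∂ν := (setIntegral_congr_fun measurableSet_Ioc inner_left).symm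
    _ = ∫ u, ∫ t, F (t, u) ∂ν ∂ν := integral_integral_swap hF
    _ = ∫ u in Ioc a b, g u * ∫ t in u..b, f t :=
        setIntegral_congr_fun measurableSet_Ioc inner_right

section
open Complex
variable {c : ℂ} {σ σ₁ σ₂ : ℝ → ℂ} {a b : ℝ}

theorem integral_exp_mul_sub_mul (x : ℝ) :
    ∫ t in a..b, exp (c * (t - x)) * σ t = exp (-(c * x)) * ∫ t in a..b, exp (c * t) * σ t := by
  rw [← intervalIntegral.integral_const_mul]
  congr 1 with t
  rw [← mul_assoc, ← exp_add]
  ring_nf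

theorem integral_exp_mul_sub_mul' (x : ℝ) :
    ∫ t in a..b, exp (c * (x - t)) * σ t = exp (c * x) * ∫ t in a..b, exp (-(c * t)) * σ t := by
  rw [← intervalIntegral.integral_const_mul]
  congr 1 with t
  rw [← mul_assoc, ← exp_add]
  ring_nf

theorem continuousOn_integral_exp_mul_sub_left (hσ : IntervalIntegrable σ volume a b) :
    ContinuousOn (fun x : ℝ => ∫ t in x..b, exp (c * (t - x)) * σ t) (uIcc a b) := by
  simp_rw [integral_exp_mul_sub_mul]
  refine (Continuous.continuousOn (by fun_prop)).mul
    (intervalIntegral.continuousOn_primitive_interval_left ?_)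
  rw [← intervalIntegrable_iff']
  exact hσ.continuousOn_mul (by fun_prop)

theorem continuousOn_integral_exp_mul_sub_right (hσ : IntervalIntegrable σ volume a b) :
    ContinuousOn (fun x : ℝ => ∫ t in a..x, exp (c * (x - t)) * σ t) (uIcc a b) := by
  simp_rw [integral_exp_mul_sub_mul']
  refine (Continuous.continuousOn (by fun_prop)).mul
    (intervalIntegral.continuousOn_primitive_interval ?_)
  rw [← intervalIntegrable_iff']
  exact hσ.continuousOn_mul (by fun_prop)

theorem integral_exp_mul_mul_K1_eFun (hσ₁ : IntervalIntegrable σ₁ volume 0 1)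
    (hσ₂ : IntervalIntegrable σ₂ volume 0 1) (μ : ℂ) :
    ∫ t in (0:ℝ)..1, exp (2*I*μ*t) * σ₂ t * K1 σ₁ σ₂ μ eFun t
      = ∫ s in (0:ℝ)..1, exp (2*I*μ*s) * σ₁ s *
          (∫ t in s..(1:ℝ), exp (2*I*μ*(t - s)) * σ₂ t)^2 := by
  have hJ := continuousOn_integral_exp_mul_sub_left (c := 2*I*μ) hσ₂
  calc ∫ t in (0:ℝ)..1, exp (2*I*μ*t) * σ₂ t * K1 σ₁ σ₂ μ eFun t
      = ∫ t in (0:ℝ)..1, exp (2*I*μ*t) * σ₂ t *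
          ∫ u in (0:ℝ)..t, σ₁ u * ∫ s in u..(1:ℝ), exp (2*I*μ*(s - u)) * σ₂ s := by
        simp only [K1, eFun, mul_one]
    _ = ∫ u in (0:ℝ)..1, (σ₁ u * ∫ s in u..(1:ℝ), exp (2*I*μ*(s - u)) * σ₂ s) *
          ∫ t in u..(1:ℝ), exp (2*I*μ*t) * σ₂ t :=
        integral_mul_integral_swap_triangle zero_le_one
          (hσ₂.continuousOn_mul (by fun_prop)) (hσ₁.mul_continuousOn hJ)
    _ = _ := by
        congr 1 with u
        rw [integral_exp_mul_sub_mul, exp_neg]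
        field_simp

theorem exp_mul_integral_exp_mul_mul_K2_eFun (hσ₁ : IntervalIntegrable σ₁ volume 0 1)
    (hσ₂ : IntervalIntegrable σ₂ volume 0 1) (μ : ℂ) :
    exp (2*I*μ) * ∫ t in (0:ℝ)..1, exp (-(2*I*μ*t)) * σ₁ t * K2 σ₁ σ₂ μ eFun t
      = ∫ s in (0:ℝ)..1, exp (2*I*μ*(1 - s)) * σ₂ s *
          (∫ t in (0:ℝ)..s, exp (2*I*μ*(s - t)) * σ₁ t)^2 := by
  have hJ := continuousOn_integral_exp_mul_sub_right (c := 2*I*μ) hσ₁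
  calc exp (2*I*μ) * ∫ t in (0:ℝ)..1, exp (-(2*I*μ*t)) * σ₁ t * K2 σ₁ σ₂ μ eFun t
      = exp (2*I*μ) * ∫ t in (0:ℝ)..1, exp (-(2*I*μ*t)) * σ₁ t *
          ∫ u in t..(1:ℝ), σ₂ u * ∫ s in (0:ℝ)..u, exp (2*I*μ*(u - s)) * σ₁ s := by
        simp only [K2, eFun, mul_one]
    _ = exp (2*I*μ) * ∫ u in (0:ℝ)..1, (σ₂ u * ∫ s in (0:ℝ)..u, exp (2*I*μ*(u - s)) * σ₁ s) *
          ∫ t in (0:ℝ)..u, exp (-(2*I*μ*t)) * σ₁ t := by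
        rw [integral_mul_integral_swap_triangle zero_le_one
          (hσ₂.mul_continuousOn hJ) (hσ₁.continuousOn_mul (by fun_prop))]
    _ = _ := by
        rw [← intervalIntegral.integral_const_mul]
        congr 1 with u
        rw [integral_exp_mul_sub_mul', show 2*I*μ*(1 - u) = 2*I*μ + -(2*I*μ*u) by ring,
          exp_add, exp_neg]
        field_simp

end

theorem norm_exp_two_mul_I_mul_le {r : ℝ} (hr : 0 ≤ r) {μ : ℂ} (hμ : -r < μ.im) {x : ℝ}
    (hx : x ∈ Icc (0:ℝ) 1) : ‖Complex.exp (2 * Complex.I * μ * x)‖ ≤ Real.exp (2 * r) := by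
  rw [Complex.norm_exp, Real.exp_le_exp]
  simp only [Complex.mul_re, Complex.mul_im, Complex.I_re, Complex.I_im, Complex.ofReal_re,
    Complex.ofReal_im, Complex.re_ofNat, Complex.im_ofNat]
  nlinarith [mul_nonneg hx.1 (by linarith : 0 ≤ μ.im + r), mul_nonneg hr (sub_nonneg.2 hx.2)]

theorem norm_integral_mul_mul_sq_le {E σ J : ℝ → ℂ} {C a b : ℝ} (hab : a ≤ b)
    (hE : ∀ x ∈ Icc a b, ‖E x‖ ≤ C)
    (hint : IntervalIntegrable (fun x => ‖σ x‖ * ‖J x‖ ^ 2) volume a b) :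
    ‖∫ x in a..b, E x * σ x * J x ^ 2‖ ≤ C * ∫ x in a..b, ‖σ x‖ * ‖J x‖ ^ 2 := by
  rw [← intervalIntegral.integral_const_mul]
  refine intervalIntegral.norm_integral_le_of_norm_le hab (ae_of_all _ fun x hx => ?_)
    (hint.const_mul C)
  rw [norm_mul, norm_mul, norm_pow, mul_assoc]
  exact mul_le_mul_of_nonneg_right (hE x (Ioc_subset_Icc_self hx)) (by positivity)

theorem stmt3_general
    (p : ℝ≥0∞) (hp1 : 1 ≤ p)
    (σ₁ σ₂ : ℝ → ℂ)
    (hσ₁ : MemLp σ₁ p (volume.restrict (Icc (0:ℝ) 1)))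
    (hσ₂ : MemLp σ₂ p (volume.restrict (Icc (0:ℝ) 1))) :
    (∀ μ : ℂ,
      ((∫ t in (0:ℝ)..1, Complex.exp (2*Complex.I*μ*t) * σ₂ t * K1 σ₁ σ₂ μ eFun t)
        = ∫ s in (0:ℝ)..1, Complex.exp (2*Complex.I*μ*s) * σ₁ s *
            (∫ t in s..(1:ℝ), Complex.exp (2*Complex.I*μ*(t - s)) * σ₂ t)^2)
      ∧ (Complex.exp (2*Complex.I*μ) *
          ∫ t in (0:ℝ)..1, Complex.exp (-(2*Complex.I*μ*t)) * σ₁ t * K2 σ₁ σ₂ μ eFun t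
        = ∫ s in (0:ℝ)..1, Complex.exp (2*Complex.I*μ*(1 - s)) * σ₂ s *
            (∫ t in (0:ℝ)..s, Complex.exp (2*Complex.I*μ*(s - t)) * σ₁ t)^2))
    ∧ (∀ r : ℝ, 0 ≤ r → ∀ μ : ℂ, -r < μ.im →
        ‖∫ t in (0:ℝ)..1, Complex.exp (2*Complex.I*μ*t) * σ₂ t * K1 σ₁ σ₂ μ eFun t‖
            ≤ Real.exp (2*r) * gammaT σ₁ σ₂ μ
        ∧ ‖Complex.exp (2*Complex.I*μ) *
            ∫ t in (0:ℝ)..1, Complex.exp (-(2*Complex.I*μ*t)) * σ₁ t * K2 σ₁ σ₂ μ eFun t‖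
            ≤ Real.exp (2*r) * gammaT σ₁ σ₂ μ) := by
  have h₁ : IntervalIntegrable σ₁ volume 0 1 :=
    (intervalIntegrable_iff_integrableOn_Icc_of_le zero_le_one).2 (hσ₁.integrable hp1)
  have h₂ : IntervalIntegrable σ₂ volume 0 1 :=
    (intervalIntegrable_iff_integrableOn_Icc_of_le zero_le_one).2 (hσ₂.integrable hp1)
  refine ⟨fun μ => ⟨integral_exp_mul_mul_K1_eFun h₁ h₂ μ,
    exp_mul_integral_exp_mul_mul_K2_eFun h₁ h₂ μ⟩, fun r hr μ hμ => ⟨?_, ?_⟩⟩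
  · have hγ : IntervalIntegrable (fun s => ‖σ₁ s‖ * gamma02 σ₂ μ s ^ 2) volume 0 1 :=
      h₁.norm.mul_continuousOn ((continuousOn_integral_exp_mul_sub_left h₂).norm.pow 2)
    rw [integral_exp_mul_mul_K1_eFun h₁ h₂]
    refine (norm_integral_mul_mul_sq_le zero_le_one
      (fun x hx => norm_exp_two_mul_I_mul_le hr hμ hx) hγ).trans ?_
    refine mul_le_mul_of_nonneg_left (le_add_of_nonneg_left ?_) (Real.exp_nonneg _)
    exact intervalIntegral.integral_nonneg zero_le_one fun s _ => by positivity
  · have hγ : IntervalIntegrable (fun s => ‖σ₂ s‖ * gamma01 σ₁ μ s ^ 2) volume 0 1 :=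
      h₂.norm.mul_continuousOn ((continuousOn_integral_exp_mul_sub_right h₁).norm.pow 2)
    rw [exp_mul_integral_exp_mul_mul_K2_eFun h₁ h₂]
    refine (norm_integral_mul_mul_sq_le (C := Real.exp (2 * r)) zero_le_one
      (fun x hx => ?_) hγ).trans ?_
    · have hx' : 1 - x ∈ Icc (0:ℝ) 1 := ⟨sub_nonneg.2 hx.2, by linarith [hx.1]⟩
      simpa using norm_exp_two_mul_I_mul_le hr hμ hx'
    refine mul_le_mul_of_nonneg_left (le_add_of_nonneg_right ?_) (Real.exp_nonneg _)
    exact intervalIntegral.integral_nonneg zero_le_one fun s _ => by positivity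

/-- two exact identities and the resulting `γ̃` bounds in the half-plane. -/
theorem stmt3
    (p : ℝ≥0∞) (hp1 : 1 ≤ p) (hp2 : p < 2)
    (σ₁ σ₂ : ℝ → ℂ) (hσ₁m : Measurable σ₁) (hσ₂m : Measurable σ₂)
    (hσ₁ : MemLp σ₁ p (volume.restrict (Icc (0:ℝ) 1)))
    (hσ₂ : MemLp σ₂ p (volume.restrict (Icc (0:ℝ) 1))) :
    (∀ μ : ℂ,
      ((∫ t in (0:ℝ)..1, Complex.exp (2*Complex.I*μ*t) * σ₂ t * K1 σ₁ σ₂ μ eFun t)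
        = ∫ s in (0:ℝ)..1, Complex.exp (2*Complex.I*μ*s) * σ₁ s *
            (∫ t in s..(1:ℝ), Complex.exp (2*Complex.I*μ*(t - s)) * σ₂ t)^2)
      ∧ (Complex.exp (2*Complex.I*μ) *
          ∫ t in (0:ℝ)..1, Complex.exp (-(2*Complex.I*μ*t)) * σ₁ t * K2 σ₁ σ₂ μ eFun t
        = ∫ s in (0:ℝ)..1, Complex.exp (2*Complex.I*μ*(1 - s)) * σ₂ s *
            (∫ t in (0:ℝ)..s, Complex.exp (2*Complex.I*μ*(s - t)) * σ₁ t)^2))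
    ∧ (∀ r : ℝ, 0 ≤ r → ∀ μ : ℂ, -r < μ.im →
        ‖∫ t in (0:ℝ)..1, Complex.exp (2*Complex.I*μ*t) * σ₂ t * K1 σ₁ σ₂ μ eFun t‖
            ≤ Real.exp (2*r) * gammaT σ₁ σ₂ μ
        ∧ ‖Complex.exp (2*Complex.I*μ) *
            ∫ t in (0:ℝ)..1, Complex.exp (-(2*Complex.I*μ*t)) * σ₁ t * K2 σ₁ σ₂ μ eFun t‖
            ≤ Real.exp (2*r) * gammaT σ₁ σ₂ μ) :=
  stmt3_general p hp1 σ₁ σ₂ hσ₁ hσ₂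
end
end

section
/- Let r ≥ 0 and set a = 2 e^{4r} ‖σ‖_{L^p[0,1]}³. There exists a constant c > 0, depending only on r, σ₁, σ₂, such that for every μ ∈ ℂ with Im μ > −r satisfying γ₁(μ) ≤ 1/(2a) and γ₂(μ) ≤ 1/(2a), and for each j ∈ {1,2}: the series z_j = Σ_{n=0}^∞ (−1)ⁿ K_jⁿ e converges absolutely in the supremum norm on [0,1]; its sum z_j is the unique continuous function on [0,1] satisfying z_j(x) + (K_j z_j)(x) = 1 for all x ∈ [0,1]; and sup_{x∈[0,1]} |z_j(x) − 1 + (K_j e)(x)| ≤ c γ̃(μ). -/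
/-!
On `C([0,1], ℂ)` the operator `K₁` has norm at most `e^{2r} ‖σ₁‖₁ ‖σ₂‖₁`. Writing `K₁² z` with
Fubini, its inner kernel is the tail `∫_{max(t,u)}^1 e^{2iμ(s-t)} σ₂(s) ds`, of modulus at most
`e^{2r} (γ₀₂(t) + γ₀₂(u))`; Hölder's inequality then gives `‖K₁²‖ ≤ 2 e^{4r} ‖σ‖_p³ γ₂(μ) ≤ 1/2`.
So the even and the odd terms of the Neumann series decay geometrically: the series converges
absolutely, its sum is the unique solution of `z + K₁ z = 1`, and `z - 1 + K₁ 1` is the tail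
`Σ_{n ≥ 2} (-K₁)ⁿ 1`, bounded by `2 (1 + ‖K₁‖) ‖K₁² 1‖`. For the constant function the same kernel
bound and `γ₀₂(u) (γ₀₂(t) + γ₀₂(u)) ≤ γ₀₂(t)²/2 + 3 γ₀₂(u)²/2` give
`‖K₁² 1‖ ≤ 2 e^{2r} ‖σ₁‖₁ ∫ |σ₁| γ₀₂²`. The substitution `x ↦ 1 - x` turns `K₂` into `K₁` with
`σ₁, σ₂` exchanged and reflected, and `γ₀₂` into `γ₀₁`.
-/

open MeasureTheory Set
open scoped ENNReal

noncomputable section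

theorem le_pow_mul_of_le_half_two_step {a : ℕ → ℝ} (h : ∀ n, a (n + 2) ≤ a n / 2) (m j : ℕ) :
    a (2 * m + j) ≤ (1 / 2) ^ m * a j := by
  induction m with
  | zero => simp
  | succ m ih =>
    calc a (2 * (m + 1) + j) = a (2 * m + j + 2) := by ring_nf
      _ ≤ a (2 * m + j) / 2 := h _
      _ ≤ (1 / 2) ^ m * a j / 2 := by gcongr
      _ = (1 / 2) ^ (m + 1) * a j := by ring

theorem summable_and_tsum_le_of_le_half_two_step {a : ℕ → ℝ} (h0 : ∀ n, 0 ≤ a n)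
    (h : ∀ n, a (n + 2) ≤ a n / 2) : Summable a ∧ ∑' n, a n ≤ 2 * (a 0 + a 1) := by
  have hpart (j : ℕ) : Summable (fun m => a (2 * m + j)) ∧ ∑' m, a (2 * m + j) ≤ 2 * a j := by
    have hgeom : Summable fun m => (1 / 2 : ℝ) ^ m * a j := summable_geometric_two.mul_right _
    have hs := hgeom.of_nonneg_of_le (fun m => h0 _) (le_pow_mul_of_le_half_two_step h · j)
    refine ⟨hs, ?_⟩
    calc ∑' m, a (2 * m + j) ≤ ∑' m, (1 / 2 : ℝ) ^ m * a j :=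
          hs.tsum_le_tsum (le_pow_mul_of_le_half_two_step h · j) hgeom
      _ = 2 * a j := by rw [tsum_mul_right, tsum_geometric_two]
  obtain ⟨he, hle⟩ : (Summable fun m => a (2 * m)) ∧ ∑' m, a (2 * m) ≤ 2 * a 0 := by
    simpa using hpart 0
  obtain ⟨ho, hlo⟩ := hpart 1
  refine ⟨he.even_add_odd ho, ?_⟩
  rw [← tsum_even_add_odd he ho]
  linarith

section NeumannSeries

variable {𝕜 E : Type*} [NontriviallyNormedField 𝕜] [NormedAddCommGroup E] [NormedSpace 𝕜 E]
  {T : E →L[𝕜] E}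

theorem summable_norm_iterate_and_tsum_le (hT : ∀ x, ‖T (T x)‖ ≤ ‖x‖ / 2) (x : E) :
    Summable (fun n => ‖T^[n] x‖) ∧ ∑' n, ‖T^[n] x‖ ≤ 2 * (‖x‖ + ‖T x‖) :=
  summable_and_tsum_le_of_le_half_two_step (fun _ => norm_nonneg _) fun n => by
    simpa only [Function.iterate_succ_apply'] using hT (T^[n] x)

theorem summable_neumann [CompleteSpace E] (hT : ∀ x, ‖T (T x)‖ ≤ ‖x‖ / 2) (x : E) :
    Summable fun n => (-1 : 𝕜) ^ n • T^[n] x :=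
  .of_norm <| by simpa [norm_smul] using (summable_norm_iterate_and_tsum_le hT x).1

theorem neumann_add_apply [CompleteSpace E] (hT : ∀ x, ‖T (T x)‖ ≤ ‖x‖ / 2) (x : E) :
    (∑' n, (-1 : 𝕜) ^ n • T^[n] x) + T (∑' n, (-1 : 𝕜) ^ n • T^[n] x) = x := by
  have hs := summable_neumann hT x
  have hs' : Summable fun n => (-1 : 𝕜) ^ (n + 1) • T^[n + 1] x := (summable_nat_add_iff 1).2 hs
  rw [T.map_tsum hs, hs.tsum_eq_zero_add, add_assoc, ← hs'.tsum_add]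
  · simp [pow_succ, Function.iterate_succ_apply']
  · simpa [pow_succ, Function.iterate_succ_apply'] using hs'.neg

theorem eq_neumann_of_add_apply_eq [CompleteSpace E] (hT : ∀ x, ‖T (T x)‖ ≤ ‖x‖ / 2) {x w : E}
    (hw : w + T w = x) : w = ∑' n, (-1 : 𝕜) ^ n • T^[n] x := by
  set v := w - ∑' n, (-1 : 𝕜) ^ n • T^[n] x
  have hv : v = -T v := by
    have := neumann_add_apply hT x
    simp only [v, map_sub]
    rw [← sub_eq_zero]
    linear_combination (norm := abel) hw - this
  have hvv : T (T v) = v :=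
    calc T (T v) = -T (-T v) := by simp only [map_neg, neg_neg]
      _ = v := by rw [← hv, ← hv]
  have hnorm := hT v
  rw [hvv] at hnorm
  have : ‖v‖ = 0 := by linarith [norm_nonneg v]
  exact sub_eq_zero.1 (norm_eq_zero.1 this)

theorem norm_neumann_sub_add_le [CompleteSpace E] (hT : ∀ x, ‖T (T x)‖ ≤ ‖x‖ / 2) (x : E) :
    ‖(∑' n, (-1 : 𝕜) ^ n • T^[n] x) - x + T x‖ ≤ 2 * (1 + ‖T‖) * ‖T (T x)‖ := by
  set y := T (T x)
  have htail : (∑' n, (-1 : 𝕜) ^ n • T^[n] x) - x + T x = ∑' n, (-1 : 𝕜) ^ n • T^[n] y := by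
    rw [← (summable_neumann hT x).sum_add_tsum_nat_add 2]
    simp [Finset.sum_range_succ, pow_add, Function.iterate_add_apply, y]
    abel
  obtain ⟨hs, hle⟩ := summable_norm_iterate_and_tsum_le hT y
  rw [htail]
  calc ‖∑' n, (-1 : 𝕜) ^ n • T^[n] y‖ ≤ ∑' n, ‖T^[n] y‖ :=
        (norm_tsum_le_tsum_norm (by simpa [norm_smul] using hs)).trans_eq (by simp [norm_smul])
    _ ≤ 2 * (‖y‖ + ‖T y‖) := hle
    _ ≤ 2 * (1 + ‖T‖) * ‖y‖ := by nlinarith [T.le_opNorm y]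

end NeumannSeries

def neumannSum (K : (ℝ → ℂ) → ℝ → ℂ) (x : ℝ) : ℂ := ∑' n : ℕ, (-1 : ℂ) ^ n * (K^[n] eFun) x

def HasNeumannSolution (K : (ℝ → ℂ) → ℝ → ℂ) (B : ℝ) : Prop :=
  (Summable fun n : ℕ => ⨆ x : Icc (0:ℝ) 1, ‖(K^[n] eFun) x‖) ∧
  ContinuousOn (neumannSum K) (Icc 0 1) ∧
  (∀ x ∈ Icc (0:ℝ) 1, neumannSum K x + K (neumannSum K) x = 1) ∧
  (∀ w : ℝ → ℂ, ContinuousOn w (Icc 0 1) → (∀ x ∈ Icc (0:ℝ) 1, w x + K w x = 1) →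
    ∀ x ∈ Icc (0:ℝ) 1, w x = neumannSum K x) ∧
  ∀ x ∈ Icc (0:ℝ) 1, ‖neumannSum K x - 1 + K eFun x‖ ≤ B

theorem HasNeumannSolution.mono {K : (ℝ → ℂ) → ℝ → ℂ} {B B' : ℝ} (h : HasNeumannSolution K B)
    (hB : B ≤ B') : HasNeumannSolution K B' :=
  let ⟨h₁, h₂, h₃, h₄, h₅⟩ := h
  ⟨h₁, h₂, h₃, h₄, fun x hx => (h₅ x hx).trans hB⟩

theorem eqOn_IccExtend {f : C(Icc (0:ℝ) 1, ℂ)} {z : ℝ → ℂ} (h : ∀ x, f x = z x) :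
    EqOn (IccExtend zero_le_one f) z (Icc 0 1) := fun x hx => by
  rw [IccExtend_of_mem _ _ hx, h]

theorem iterate_apply_eq_of_IccExtend {K : (ℝ → ℂ) → ℝ → ℂ}
    {T : C(Icc (0:ℝ) 1, ℂ) → C(Icc (0:ℝ) 1, ℂ)} (hK : ∀ f x, T f x = K (IccExtend zero_le_one f) x)
    (hloc : ∀ z w, EqOn z w (Icc 0 1) → EqOn (K z) (K w) (Icc 0 1)) (n : ℕ)
    {f : C(Icc (0:ℝ) 1, ℂ)} {z : ℝ → ℂ} (h : ∀ x, f x = z x) (x : Icc (0:ℝ) 1) :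
    (T^[n] f) x = (K^[n] z) x := by
  induction n generalizing x with
  | zero => exact h x
  | succ n ih =>
    rw [Function.iterate_succ_apply', Function.iterate_succ_apply', hK]
    exact hloc _ _ (eqOn_IccExtend ih) x.2

theorem hasNeumannSolution_of_continuousLinearMap {K : (ℝ → ℂ) → ℝ → ℂ}
    (T : C(Icc (0:ℝ) 1, ℂ) →L[ℂ] C(Icc (0:ℝ) 1, ℂ))
    (hK : ∀ f x, T f x = K (IccExtend zero_le_one f) x)
    (hloc : ∀ z w, EqOn z w (Icc 0 1) → EqOn (K z) (K w) (Icc 0 1))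
    (hT : ∀ f, ‖T (T f)‖ ≤ ‖f‖ / 2) :
    HasNeumannSolution K (2 * (1 + ‖T‖) * ‖T (T 1)‖) := by
  have he (n : ℕ) (x) : (T^[n] 1) x = (K^[n] eFun) x :=
    iterate_apply_eq_of_IccExtend hK hloc n (fun _ => rfl) x
  set Z := ∑' n, (-1 : ℂ) ^ n • T^[n] 1
  have hZ (x : Icc (0:ℝ) 1) : Z x = neumannSum K x := by
    rw [← ContinuousMap.tsum_apply (summable_neumann hT 1)]
    simp [he, neumannSum]
  have hZext : EqOn (IccExtend zero_le_one Z) (neumannSum K) (Icc 0 1) := eqOn_IccExtend hZ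
  refine ⟨?_, ?_, fun x hx => ?_, fun w hw hsol x hx => ?_, fun x hx => ?_⟩
  · refine (summable_norm_iterate_and_tsum_le hT 1).1.congr fun n => ?_
    simp [ContinuousMap.norm_eq_iSup_norm, he]
  · rw [continuousOn_iff_continuous_domRestrict]
    convert Z.continuous using 1
    exact funext fun x => (hZ x).symm
  · have hTZ : K (IccExtend zero_le_one Z) x = T Z ⟨x, hx⟩ := (hK Z ⟨x, hx⟩).symm
    rw [← hZ ⟨x, hx⟩, ← hloc _ _ hZext hx, hTZ]
    exact congrArg (· ⟨x, hx⟩) (neumann_add_apply hT 1)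
  · set W : C(Icc (0:ℝ) 1, ℂ) := ⟨(Icc 0 1).domRestrict w, hw.domRestrict⟩
    have hWT : W + T W = 1 := by
      ext y
      simp only [ContinuousMap.add_apply, hK, ContinuousMap.one_apply]
      rw [hloc _ w (eqOn_IccExtend (z := w) fun _ => rfl) y.2]
      exact hsol y y.2
    rw [← hZ ⟨x, hx⟩]
    exact congrArg (· ⟨x, hx⟩) (eq_neumann_of_add_apply_eq hT hWT)
  · calc ‖neumannSum K x - 1 + K eFun x‖ = ‖(Z - 1 + T 1) ⟨x, hx⟩‖ := by
          simp only [ContinuousMap.add_apply, ContinuousMap.sub_apply, ContinuousMap.one_apply, hZ,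
            hK]
          rfl
      _ ≤ ‖Z - 1 + T 1‖ := ContinuousMap.norm_coe_le_norm _ _
      _ ≤ _ := norm_neumann_sub_add_le hT 1

theorem IntervalIntegrable.of_le_of_le {E : Type*} [NormedAddCommGroup E] {f : ℝ → E}
    {ν : Measure ℝ} {a b c d : ℝ} (hf : IntervalIntegrable f ν c d) (hca : c ≤ a) (hab : a ≤ b)
    (hbd : b ≤ d) : IntervalIntegrable f ν a b :=
  hf.mono_set <| by
    rw [uIcc_of_le hab, uIcc_of_le (hca.trans (hab.trans hbd))]
    exact Icc_subset_Icc hca hbd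

theorem norm_intervalIntegral_le_of_norm_le {E : Type*} [NormedAddCommGroup E] [NormedSpace ℝ E]
    {f : ℝ → E} {g : ℝ → ℝ} {a b c d : ℝ} (hca : c ≤ a) (hab : a ≤ b) (hbd : b ≤ d)
    (hg : IntervalIntegrable g volume c d) (hg0 : ∀ t ∈ Icc c d, 0 ≤ g t)
    (hfg : ∀ t ∈ Icc a b, ‖f t‖ ≤ g t) : ‖∫ t in a..b, f t‖ ≤ ∫ t in c..d, g t :=
  calc ‖∫ t in a..b, f t‖ ≤ ∫ t in a..b, g t :=
        intervalIntegral.norm_integral_le_of_norm_le hab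
          (ae_of_all _ fun t ht => hfg t (Ioc_subset_Icc_self ht)) (hg.of_le_of_le hca hab hbd)
    _ ≤ ∫ t in c..d, g t :=
        intervalIntegral.integral_mono_interval hca hab hbd
          (ae_restrict_of_forall_mem measurableSet_Ioc fun t ht => hg0 t (Ioc_subset_Icc_self ht))
          hg

theorem integral_mul_integral_swap {F G : ℝ → ℂ} {a b t : ℝ} (ht : t ∈ Icc a b)
    (hF : IntervalIntegrable F volume a b) (hG : IntervalIntegrable G volume a b) :
    ∫ s in t..b, F s * ∫ u in a..s, G u = ∫ u in a..b, G u * ∫ s in max t u..b, F s := by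
  set H := {p : ℝ × ℝ | p.2 ≤ p.1}.indicator fun p => F p.1 * G p.2
  have hint : Integrable H ((volume.restrict (Ioc t b)).prod (volume.restrict (Ioc a b))) :=
    ((hF.of_le_of_le ht.1 ht.2 le_rfl).1.mul_prod hG.1).indicator
      (measurableSet_le measurable_snd measurable_fst)
  have hs (s u : ℝ) : H (s, u) = F s * (Iic s).indicator G u := by
    by_cases h : u ≤ s <;> simp [H, h]
  have hu (s u : ℝ) : H (s, u) = (Ici u).indicator F s * G u := by
    by_cases h : u ≤ s <;> simp [H, h]
  have hIoi (u : ℝ) : Ioi u ∩ Ioc t b = Ioc (max t u) b := by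
    ext
    simp only [mem_inter_iff, mem_Ioi, mem_Ioc, max_lt_iff]
    tauto
  calc ∫ s in t..b, F s * ∫ u in a..s, G u
      = ∫ s in Ioc t b, ∫ u in Ioc a b, H (s, u) := by
        rw [intervalIntegral.integral_of_le ht.2]
        refine setIntegral_congr_fun measurableSet_Ioc fun s hs' => ?_
        simp only [hs, integral_const_mul]
        rw [integral_indicator measurableSet_Iic, Measure.restrict_restrict measurableSet_Iic,
          Iic_inter_Ioc_of_le hs'.2, intervalIntegral.integral_of_le (ht.1.trans hs'.1.le)]
    _ = ∫ u in Ioc a b, ∫ s in Ioc t b, H (s, u) := integral_integral_swap hint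
    _ = ∫ u in a..b, G u * ∫ s in max t u..b, F s := by
        rw [intervalIntegral.integral_of_le (ht.1.trans ht.2)]
        refine setIntegral_congr_fun measurableSet_Ioc fun u hu' => ?_
        simp only [hu, integral_mul_const]
        rw [integral_indicator measurableSet_Ici, Measure.restrict_restrict measurableSet_Ici,
          setIntegral_congr_set ((Ioi_ae_eq_Ici (μ := volume)).symm.inter (ae_eq_refl (Ioc t b))),
          hIoi, intervalIntegral.integral_of_le (max_le ht.2 hu'.2), mul_comm]

theorem continuousOn_primitives {E : Type*} [NormedAddCommGroup E] [NormedSpace ℝ E]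
    {f : ℝ → E} {a b : ℝ} (hab : a ≤ b) (hf : IntervalIntegrable f volume a b) :
    ContinuousOn (fun x => ∫ t in a..x, f t) (Icc a b) ∧
      ContinuousOn (fun x => ∫ t in x..b, f t) (Icc a b) := by
  have hf' : IntegrableOn f (uIcc a b) := by
    rw [uIcc_of_le hab]
    exact (intervalIntegrable_iff_integrableOn_Icc_of_le hab).1 hf
  rw [← uIcc_of_le hab]
  exact ⟨intervalIntegral.continuousOn_primitive_interval hf',
    intervalIntegral.continuousOn_primitive_interval_left hf'⟩

theorem integral_norm_mul_add_mul {σ : ℝ → ℂ} (hσ : IntervalIntegrable σ volume 0 1) {φ : ℝ → ℝ}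
    (hφ : ContinuousOn φ (Icc 0 1)) (α β : ℝ) :
    ∫ u in (0:ℝ)..1, ‖σ u‖ * (α + β * φ u)
      = α * (∫ u in (0:ℝ)..1, ‖σ u‖) + β * ∫ u in (0:ℝ)..1, ‖σ u‖ * φ u := by
  rw [← uIcc_of_le zero_le_one] at hφ
  simp only [mul_add, mul_left_comm _ β]
  rw [intervalIntegral.integral_add (hσ.norm.mul_const α)
      ((hσ.norm.mul_continuousOn hφ).const_mul β),
    intervalIntegral.integral_mul_const, intervalIntegral.integral_const_mul, mul_comm]

theorem intervalIntegral_eq_integral_one_sub {E : Type*} [NormedAddCommGroup E] [NormedSpace ℝ E]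
    (f : ℝ → E) (a b : ℝ) : ∫ t in a..b, f t = ∫ t in 1 - b..1 - a, f (1 - t) := by
  rw [intervalIntegral.integral_comp_sub_left, sub_sub_cancel, sub_sub_cancel]

theorem integral_unitInterval_comp_one_sub {E : Type*} [NormedAddCommGroup E] [NormedSpace ℝ E]
    (f : ℝ → E) : ∫ t in (0:ℝ)..1, f (1 - t) = ∫ t in (0:ℝ)..1, f t := by
  rw [intervalIntegral_eq_integral_one_sub f 0 1, sub_self, sub_zero]

theorem IntervalIntegrable.comp_one_sub {σ : ℝ → ℂ} (hσ : IntervalIntegrable σ volume 0 1) :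
    IntervalIntegrable (fun t => σ (1 - t)) volume 0 1 := by
  simpa using (hσ.comp_sub_left 1).symm

theorem mapsTo_one_sub_Icc : MapsTo (fun x : ℝ => 1 - x) (Icc 0 1) (Icc 0 1) :=
  fun x hx => ⟨by linarith [hx.2], by linarith [hx.1]⟩

theorem norm_cexp_two_I_mul_sub_le {μ : ℂ} {r : ℝ} (hr : 0 ≤ r) (hμ : -r < μ.im) {a b : ℝ}
    (hab : a ≤ b) (hba : b - a ≤ 1) :
    ‖Complex.exp (2 * Complex.I * μ * (b - a))‖ ≤ Real.exp (2 * r) := by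
  rw [Complex.norm_exp, Real.exp_le_exp]
  have hre : (2 * Complex.I * μ * (b - a)).re = -2 * μ.im * (b - a) := by
    simp [Complex.mul_re, Complex.mul_im]
  rw [hre]
  nlinarith [mul_le_mul_of_nonneg_right hμ.le (sub_nonneg.2 hab)]

def K1Inner (σ₂ : ℝ → ℂ) (μ : ℂ) (z : ℝ → ℂ) (t : ℝ) : ℂ :=
  ∫ s in t..(1:ℝ), Complex.exp (2 * Complex.I * μ * (s - t)) * σ₂ s * z s

section K1Estimates

variable {σ₁ σ₂ z w : ℝ → ℂ} {μ : ℂ} {r t x : ℝ}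

theorem K1_apply : K1 σ₁ σ₂ μ z x = ∫ t in (0:ℝ)..x, σ₁ t * K1Inner σ₂ μ z t := rfl

theorem gamma02_eq_norm_K1Inner : gamma02 σ₂ μ t = ‖K1Inner σ₂ μ eFun t‖ := by
  simp [gamma02, K1Inner, eFun]

theorem intervalIntegrable_K1Inner_integrand (hσ₂ : IntervalIntegrable σ₂ volume 0 1)
    (hz : ContinuousOn z (Icc 0 1)) (t : ℝ) :
    IntervalIntegrable (fun s => Complex.exp (2 * Complex.I * μ * (s - t)) * σ₂ s * z s)
      volume 0 1 := by
  rw [← uIcc_of_le zero_le_one] at hz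
  exact (hσ₂.continuousOn_mul (by fun_prop)).mul_continuousOn hz

theorem continuousOn_K1Inner (hσ₂ : IntervalIntegrable σ₂ volume 0 1)
    (hz : ContinuousOn z (Icc 0 1)) : ContinuousOn (K1Inner σ₂ μ z) (Icc 0 1) := by
  have hfactor (t : ℝ) : K1Inner σ₂ μ z t = Complex.exp (-(2 * Complex.I * μ * t)) *
      ∫ s in t..(1:ℝ), Complex.exp (2 * Complex.I * μ * s) * σ₂ s * z s := by
    rw [K1Inner, ← intervalIntegral.integral_const_mul]
    congr 1 with s
    rw [mul_sub, sub_eq_neg_add, Complex.exp_add]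
    ring
  rw [← uIcc_of_le zero_le_one] at hz
  have hprim := (continuousOn_primitives zero_le_one
    ((hσ₂.continuousOn_mul (g := fun s : ℝ => Complex.exp (2 * Complex.I * μ * s))
      (by fun_prop)).mul_continuousOn hz)).2
  have hexp : ContinuousOn (fun t : ℝ => Complex.exp (-(2 * Complex.I * μ * t))) (Icc 0 1) := by
    fun_prop
  exact (hexp.mul hprim).congr fun t _ => hfactor t

theorem continuousOn_K1 (hσ₁ : IntervalIntegrable σ₁ volume 0 1)
    (hσ₂ : IntervalIntegrable σ₂ volume 0 1) (hz : ContinuousOn z (Icc 0 1)) :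
    ContinuousOn (K1 σ₁ σ₂ μ z) (Icc 0 1) := by
  have hV := continuousOn_K1Inner (μ := μ) hσ₂ hz
  rw [← uIcc_of_le zero_le_one] at hV
  exact (continuousOn_primitives zero_le_one (hσ₁.mul_continuousOn hV)).1

theorem continuousOn_gamma02 (hσ₂ : IntervalIntegrable σ₂ volume 0 1) :
    ContinuousOn (gamma02 σ₂ μ) (Icc 0 1) :=
  (continuousOn_K1Inner (μ := μ) hσ₂ (z := eFun) continuousOn_const).norm.congr
    fun _ _ => gamma02_eq_norm_K1Inner

theorem gamma02_nonneg : 0 ≤ gamma02 σ₂ μ t := norm_nonneg _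

theorem K1_congr (h : EqOn z w (Icc 0 1)) : EqOn (K1 σ₁ σ₂ μ z) (K1 σ₁ σ₂ μ w) (Icc 0 1) := by
  intro x hx
  rw [K1_apply, K1_apply]
  refine intervalIntegral.integral_congr fun t ht => ?_
  rw [uIcc_of_le hx.1] at ht
  dsimp only [K1Inner]
  congr 1
  refine intervalIntegral.integral_congr fun s hs => ?_
  rw [uIcc_of_le (ht.2.trans hx.2)] at hs
  simp only [h ⟨ht.1.trans hs.1, hs.2⟩]

theorem K1Inner_add (hσ₂ : IntervalIntegrable σ₂ volume 0 1) (hz : ContinuousOn z (Icc 0 1))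
    (hw : ContinuousOn w (Icc 0 1)) (ht : t ∈ Icc (0:ℝ) 1) :
    K1Inner σ₂ μ (z + w) t = K1Inner σ₂ μ z t + K1Inner σ₂ μ w t := by
  simp only [K1Inner, Pi.add_apply, mul_add]
  exact intervalIntegral.integral_add
    ((intervalIntegrable_K1Inner_integrand hσ₂ hz t).of_le_of_le ht.1 ht.2 le_rfl)
    ((intervalIntegrable_K1Inner_integrand hσ₂ hw t).of_le_of_le ht.1 ht.2 le_rfl)

theorem K1_add (hσ₁ : IntervalIntegrable σ₁ volume 0 1) (hσ₂ : IntervalIntegrable σ₂ volume 0 1)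
    (hz : ContinuousOn z (Icc 0 1)) (hw : ContinuousOn w (Icc 0 1)) (hx : x ∈ Icc (0:ℝ) 1) :
    K1 σ₁ σ₂ μ (z + w) x = K1 σ₁ σ₂ μ z x + K1 σ₁ σ₂ μ w x := by
  have hint {v : ℝ → ℂ} (hv : ContinuousOn v (Icc 0 1)) :
      IntervalIntegrable (fun t => σ₁ t * K1Inner σ₂ μ v t) volume 0 x := by
    have hV := continuousOn_K1Inner (μ := μ) hσ₂ hv
    rw [← uIcc_of_le zero_le_one] at hV
    exact (hσ₁.mul_continuousOn hV).of_le_of_le le_rfl hx.1 hx.2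
  simp only [K1_apply]
  rw [← intervalIntegral.integral_add (hint hz) (hint hw)]
  refine intervalIntegral.integral_congr fun t ht => ?_
  rw [uIcc_of_le hx.1] at ht
  simp only [K1Inner_add hσ₂ hz hw ⟨ht.1, ht.2.trans hx.2⟩, mul_add]

theorem K1_smul (c : ℂ) : K1 σ₁ σ₂ μ (c • z) x = c • K1 σ₁ σ₂ μ z x := by
  simp only [K1_apply, K1Inner, Pi.smul_apply, smul_eq_mul, ← intervalIntegral.integral_const_mul]
  congr 1 with t
  congr 1 with s
  ring

theorem norm_K1Inner_le (hr : 0 ≤ r) (hμ : -r < μ.im) (hσ₂ : IntervalIntegrable σ₂ volume 0 1)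
    {C : ℝ} (hC : ∀ s ∈ Icc (0:ℝ) 1, ‖z s‖ ≤ C) (ht : t ∈ Icc (0:ℝ) 1) :
    ‖K1Inner σ₂ μ z t‖ ≤ Real.exp (2 * r) * C * ∫ s in (0:ℝ)..1, ‖σ₂ s‖ := by
  have hC0 : 0 ≤ C := (norm_nonneg _).trans (hC 0 ⟨le_rfl, zero_le_one⟩)
  rw [← intervalIntegral.integral_const_mul]
  refine norm_intervalIntegral_le_of_norm_le ht.1 ht.2 le_rfl (hσ₂.norm.const_mul _)
    (fun s _ => by positivity) fun s hs => ?_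
  rw [norm_mul, norm_mul, mul_right_comm]
  gcongr
  · exact norm_cexp_two_I_mul_sub_le hr hμ hs.1 (by linarith [ht.1, hs.2])
  · exact hC s ⟨ht.1.trans hs.1, hs.2⟩

theorem norm_K1_le_of_norm_K1Inner_le (hσ₁ : IntervalIntegrable σ₁ volume 0 1) {ψ : ℝ → ℝ}
    (hψ : ContinuousOn ψ (Icc 0 1)) (h : ∀ t ∈ Icc (0:ℝ) 1, ‖K1Inner σ₂ μ z t‖ ≤ ψ t)
    (hx : x ∈ Icc (0:ℝ) 1) : ‖K1 σ₁ σ₂ μ z x‖ ≤ ∫ t in (0:ℝ)..1, ‖σ₁ t‖ * ψ t := by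
  rw [← uIcc_of_le zero_le_one] at hψ
  refine norm_intervalIntegral_le_of_norm_le le_rfl hx.1 hx.2 (hσ₁.norm.mul_continuousOn hψ)
    (fun t ht => mul_nonneg (norm_nonneg _) ((norm_nonneg _).trans (h t ht))) fun t ht => ?_
  rw [norm_mul]
  exact mul_le_mul_of_nonneg_left (h t ⟨ht.1, ht.2.trans hx.2⟩) (norm_nonneg _)

theorem norm_K1_le (hr : 0 ≤ r) (hμ : -r < μ.im) (hσ₁ : IntervalIntegrable σ₁ volume 0 1)
    (hσ₂ : IntervalIntegrable σ₂ volume 0 1) {C : ℝ} (hC : ∀ s ∈ Icc (0:ℝ) 1, ‖z s‖ ≤ C)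
    (hx : x ∈ Icc (0:ℝ) 1) :
    ‖K1 σ₁ σ₂ μ z x‖
      ≤ Real.exp (2 * r) * (∫ t in (0:ℝ)..1, ‖σ₁ t‖) * (∫ t in (0:ℝ)..1, ‖σ₂ t‖) * C := by
  refine (norm_K1_le_of_norm_K1Inner_le hσ₁ continuousOn_const
    (fun t ht => norm_K1Inner_le hr hμ hσ₂ hC ht) hx).trans_eq ?_
  rw [intervalIntegral.integral_mul_const]
  ring

theorem norm_integral_cexp_mul_le (hr : 0 ≤ r) (hμ : -r < μ.im) {m : ℝ} (ht : 0 ≤ t)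
    (htm : t ≤ m) (hm : m ≤ 1) :
    ‖∫ s in m..(1:ℝ), Complex.exp (2 * Complex.I * μ * (s - t)) * σ₂ s‖
      ≤ Real.exp (2 * r) * gamma02 σ₂ μ m := by
  have hsplit (s : ℝ) : Complex.exp (2 * Complex.I * μ * (s - t)) * σ₂ s =
      Complex.exp (2 * Complex.I * μ * (m - t)) *
        (Complex.exp (2 * Complex.I * μ * (s - m)) * σ₂ s) := by
    rw [← mul_assoc, ← Complex.exp_add]
    congr 2
    ring
  simp_rw [hsplit]
  rw [intervalIntegral.integral_const_mul, norm_mul, gamma02]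
  gcongr
  exact norm_cexp_two_I_mul_sub_le hr hμ htm (by linarith)

theorem K1Inner_K1 (hσ₁ : IntervalIntegrable σ₁ volume 0 1) (hσ₂ : IntervalIntegrable σ₂ volume 0 1)
    (hz : ContinuousOn z (Icc 0 1)) (ht : t ∈ Icc (0:ℝ) 1) :
    K1Inner σ₂ μ (K1 σ₁ σ₂ μ z) t = ∫ u in (0:ℝ)..1, σ₁ u * K1Inner σ₂ μ z u *
      ∫ s in max t u..(1:ℝ), Complex.exp (2 * Complex.I * μ * (s - t)) * σ₂ s := by
  have hV := continuousOn_K1Inner (μ := μ) hσ₂ hz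
  rw [← uIcc_of_le zero_le_one] at hV
  exact integral_mul_integral_swap ht (hσ₂.continuousOn_mul (by fun_prop)) (hσ₁.mul_continuousOn hV)

theorem norm_K1Inner_K1_le (hr : 0 ≤ r) (hμ : -r < μ.im) (hσ₁ : IntervalIntegrable σ₁ volume 0 1)
    (hσ₂ : IntervalIntegrable σ₂ volume 0 1) (hz : ContinuousOn z (Icc 0 1))
    (ht : t ∈ Icc (0:ℝ) 1) {ψ : ℝ → ℝ} (hψ : ContinuousOn ψ (Icc 0 1))
    (hzψ : ∀ u ∈ Icc (0:ℝ) 1, ‖K1Inner σ₂ μ z u‖ * (gamma02 σ₂ μ t + gamma02 σ₂ μ u) ≤ ψ u) :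
    ‖K1Inner σ₂ μ (K1 σ₁ σ₂ μ z) t‖ ≤ Real.exp (2 * r) * ∫ u in (0:ℝ)..1, ‖σ₁ u‖ * ψ u := by
  have hψ0 (u) (hu : u ∈ Icc (0:ℝ) 1) : 0 ≤ ψ u :=
    (mul_nonneg (norm_nonneg _) (add_nonneg gamma02_nonneg gamma02_nonneg)).trans (hzψ u hu)
  rw [← uIcc_of_le zero_le_one] at hψ
  rw [K1Inner_K1 hσ₁ hσ₂ hz ht, ← intervalIntegral.integral_const_mul]
  refine norm_intervalIntegral_le_of_norm_le le_rfl zero_le_one le_rfl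
    ((hσ₁.norm.mul_continuousOn hψ).const_mul _)
    (fun u hu => mul_nonneg (Real.exp_nonneg _) (mul_nonneg (norm_nonneg _) (hψ0 u hu)))
    fun u hu => ?_
  have hγ : gamma02 σ₂ μ (max t u) ≤ gamma02 σ₂ μ t + gamma02 σ₂ μ u := by
    rcases max_choice t u with h | h <;> rw [h]
    exacts [le_add_of_nonneg_right gamma02_nonneg, le_add_of_nonneg_left gamma02_nonneg]
  have htail := (norm_integral_cexp_mul_le (σ₂ := σ₂) hr hμ ht.1 (le_max_left t u)
    (max_le ht.2 hu.2)).trans (mul_le_mul_of_nonneg_left hγ (Real.exp_nonneg _))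
  rw [norm_mul, norm_mul]
  calc ‖σ₁ u‖ * ‖K1Inner σ₂ μ z u‖ * ‖∫ s in max t u..(1:ℝ),
        Complex.exp (2 * Complex.I * μ * (s - t)) * σ₂ s‖
      ≤ ‖σ₁ u‖ * ‖K1Inner σ₂ μ z u‖ * (Real.exp (2 * r) * (gamma02 σ₂ μ t + gamma02 σ₂ μ u)) := by
        gcongr
    _ = Real.exp (2 * r) * (‖σ₁ u‖ * (‖K1Inner σ₂ μ z u‖ * (gamma02 σ₂ μ t + gamma02 σ₂ μ u))) := by
        ring
    _ ≤ Real.exp (2 * r) * (‖σ₁ u‖ * ψ u) := by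
        gcongr
        exact hzψ u hu

theorem norm_K1_K1_le (hr : 0 ≤ r) (hμ : -r < μ.im) (hσ₁ : IntervalIntegrable σ₁ volume 0 1)
    (hσ₂ : IntervalIntegrable σ₂ volume 0 1) (hz : ContinuousOn z (Icc 0 1)) {C : ℝ}
    (hC : ∀ s ∈ Icc (0:ℝ) 1, ‖z s‖ ≤ C) (hx : x ∈ Icc (0:ℝ) 1) :
    ‖K1 σ₁ σ₂ μ (K1 σ₁ σ₂ μ z) x‖ ≤ 2 * Real.exp (2 * r) ^ 2 * (∫ t in (0:ℝ)..1, ‖σ₁ t‖) *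
      (∫ t in (0:ℝ)..1, ‖σ₂ t‖) * (∫ u in (0:ℝ)..1, ‖σ₁ u‖ * gamma02 σ₂ μ u) * C := by
  set S₁ := ∫ t in (0:ℝ)..1, ‖σ₁ t‖
  set H := ∫ u in (0:ℝ)..1, ‖σ₁ u‖ * gamma02 σ₂ μ u
  set B := Real.exp (2 * r) * C * ∫ t in (0:ℝ)..1, ‖σ₂ t‖
  have hγ := continuousOn_gamma02 (μ := μ) hσ₂
  have hinner (t) (ht : t ∈ Icc (0:ℝ) 1) :
      ‖K1Inner σ₂ μ (K1 σ₁ σ₂ μ z) t‖ ≤ Real.exp (2 * r) * (B * gamma02 σ₂ μ t * S₁ + B * H) := by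
    have h := norm_K1Inner_K1_le hr hμ hσ₁ hσ₂ hz ht
      (ψ := fun u => B * gamma02 σ₂ μ t + B * gamma02 σ₂ μ u)
      (continuousOn_const.add (continuousOn_const.mul hγ)) fun u hu => by
        rw [← mul_add]
        exact mul_le_mul_of_nonneg_right (norm_K1Inner_le hr hμ hσ₂ hC hu)
          (add_nonneg gamma02_nonneg gamma02_nonneg)
    rwa [integral_norm_mul_add_mul hσ₁ hγ] at h
  refine (norm_K1_le_of_norm_K1Inner_le hσ₁
    (ψ := fun t => Real.exp (2 * r) * (B * H) + Real.exp (2 * r) * B * S₁ * gamma02 σ₂ μ t)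
    (continuousOn_const.add (continuousOn_const.mul hγ))
    (fun t ht => (hinner t ht).trans_eq (by ring)) hx).trans_eq ?_
  rw [integral_norm_mul_add_mul hσ₁ hγ]
  ring

theorem norm_K1_K1_eFun_le (hr : 0 ≤ r) (hμ : -r < μ.im) (hσ₁ : IntervalIntegrable σ₁ volume 0 1)
    (hσ₂ : IntervalIntegrable σ₂ volume 0 1) (hx : x ∈ Icc (0:ℝ) 1) :
    ‖K1 σ₁ σ₂ μ (K1 σ₁ σ₂ μ eFun) x‖ ≤ 2 * Real.exp (2 * r) * (∫ t in (0:ℝ)..1, ‖σ₁ t‖) *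
      ∫ u in (0:ℝ)..1, ‖σ₁ u‖ * gamma02 σ₂ μ u ^ 2 := by
  set S₁ := ∫ t in (0:ℝ)..1, ‖σ₁ t‖
  set G := ∫ u in (0:ℝ)..1, ‖σ₁ u‖ * gamma02 σ₂ μ u ^ 2
  have hγ : ContinuousOn (fun u => gamma02 σ₂ μ u ^ 2) (Icc 0 1) :=
    (continuousOn_gamma02 hσ₂).pow 2
  have hinner (t) (ht : t ∈ Icc (0:ℝ) 1) : ‖K1Inner σ₂ μ (K1 σ₁ σ₂ μ eFun) t‖
      ≤ Real.exp (2 * r) * (1 / 2 * gamma02 σ₂ μ t ^ 2 * S₁ + 3 / 2 * G) := by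
    have h := norm_K1Inner_K1_le (z := eFun) hr hμ hσ₁ hσ₂ continuousOn_const ht
      (ψ := fun u => 1 / 2 * gamma02 σ₂ μ t ^ 2 + 3 / 2 * gamma02 σ₂ μ u ^ 2)
      (continuousOn_const.add (continuousOn_const.mul hγ)) fun u _ => by
        rw [← gamma02_eq_norm_K1Inner]
        -- AM-GM: `γ₀₂(u) γ₀₂(t) ≤ (γ₀₂(t)² + γ₀₂(u)²) / 2`
        nlinarith [sq_nonneg (gamma02 σ₂ μ t - gamma02 σ₂ μ u)]
    rwa [integral_norm_mul_add_mul hσ₁ hγ] at h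
  refine (norm_K1_le_of_norm_K1Inner_le hσ₁
    (ψ := fun t => Real.exp (2 * r) * (3 / 2 * G) +
      Real.exp (2 * r) * (1 / 2) * S₁ * gamma02 σ₂ μ t ^ 2)
    (continuousOn_const.add (continuousOn_const.mul hγ))
    (fun t ht => (hinner t ht).trans_eq (by ring)) hx).trans_eq ?_
  rw [integral_norm_mul_add_mul hσ₁ hγ]
  ring

theorem norm_IccExtend_le (f : C(Icc (0:ℝ) 1, ℂ)) (s : ℝ) : ‖IccExtend zero_le_one f s‖ ≤ ‖f‖ :=
  f.norm_coe_le_norm _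

theorem continuousOn_IccExtend (f : C(Icc (0:ℝ) 1, ℂ)) :
    ContinuousOn (IccExtend zero_le_one f) (Icc 0 1) :=
  (continuous_IccExtend_iff.2 f.continuous).continuousOn

def K1CLM (hσ₁ : IntervalIntegrable σ₁ volume 0 1) (hσ₂ : IntervalIntegrable σ₂ volume 0 1)
    (μ : ℂ) : C(Icc (0:ℝ) 1, ℂ) →L[ℂ] C(Icc (0:ℝ) 1, ℂ) :=
  LinearMap.mkContinuousOfExistsBound
    { toFun := fun f => ⟨(Icc 0 1).domRestrict (K1 σ₁ σ₂ μ (IccExtend zero_le_one f)),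
        (continuousOn_K1 hσ₁ hσ₂ (continuousOn_IccExtend f)).domRestrict⟩
      map_add' := fun f g => ContinuousMap.ext fun x =>
        K1_add hσ₁ hσ₂ (continuousOn_IccExtend f) (continuousOn_IccExtend g) x.2
      map_smul' := fun c f => ContinuousMap.ext fun _ => K1_smul c }
    ⟨_, fun f => (ContinuousMap.norm_le_of_nonempty _).2 fun x =>
      norm_K1_le (r := |μ.im| + 1) (by positivity) (by linarith [neg_abs_le μ.im]) hσ₁ hσ₂
        (fun s _ => norm_IccExtend_le f s) x.2⟩

theorem K1CLM_K1CLM_apply (hσ₁ : IntervalIntegrable σ₁ volume 0 1)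
    (hσ₂ : IntervalIntegrable σ₂ volume 0 1) (f : C(Icc (0:ℝ) 1, ℂ)) (x : Icc (0:ℝ) 1) :
    K1CLM hσ₁ hσ₂ μ (K1CLM hσ₁ hσ₂ μ f) x = K1 σ₁ σ₂ μ (K1 σ₁ σ₂ μ (IccExtend zero_le_one f)) x :=
  K1_congr (fun _ hy => IccExtend_of_mem _ _ hy) x.2

theorem norm_K1CLM_le (hr : 0 ≤ r) (hμ : -r < μ.im) (hσ₁ : IntervalIntegrable σ₁ volume 0 1)
    (hσ₂ : IntervalIntegrable σ₂ volume 0 1) :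
    ‖K1CLM hσ₁ hσ₂ μ‖
      ≤ Real.exp (2 * r) * (∫ t in (0:ℝ)..1, ‖σ₁ t‖) * ∫ t in (0:ℝ)..1, ‖σ₂ t‖ := by
  have h0 (σ : ℝ → ℂ) : 0 ≤ ∫ t in (0:ℝ)..1, ‖σ t‖ :=
    intervalIntegral.integral_nonneg zero_le_one fun _ _ => norm_nonneg _
  refine ContinuousLinearMap.opNorm_le_bound _ (by have := h0 σ₁; have := h0 σ₂; positivity)
    fun f => (ContinuousMap.norm_le_of_nonempty _).2 fun x => ?_
  exact norm_K1_le hr hμ hσ₁ hσ₂ (fun s _ => norm_IccExtend_le f s) x.2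

theorem norm_K1CLM_K1CLM_le (hr : 0 ≤ r) (hμ : -r < μ.im)
    (hσ₁ : IntervalIntegrable σ₁ volume 0 1) (hσ₂ : IntervalIntegrable σ₂ volume 0 1)
    (f : C(Icc (0:ℝ) 1, ℂ)) :
    ‖K1CLM hσ₁ hσ₂ μ (K1CLM hσ₁ hσ₂ μ f)‖ ≤ 2 * Real.exp (2 * r) ^ 2 *
      (∫ t in (0:ℝ)..1, ‖σ₁ t‖) * (∫ t in (0:ℝ)..1, ‖σ₂ t‖) *
      (∫ u in (0:ℝ)..1, ‖σ₁ u‖ * gamma02 σ₂ μ u) * ‖f‖ :=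
  (ContinuousMap.norm_le_of_nonempty _).2 fun x => by
    rw [K1CLM_K1CLM_apply]
    exact norm_K1_K1_le hr hμ hσ₁ hσ₂ (continuousOn_IccExtend f)
      (fun s _ => norm_IccExtend_le f s) x.2

theorem norm_K1CLM_K1CLM_one_le (hr : 0 ≤ r) (hμ : -r < μ.im)
    (hσ₁ : IntervalIntegrable σ₁ volume 0 1) (hσ₂ : IntervalIntegrable σ₂ volume 0 1) :
    ‖K1CLM hσ₁ hσ₂ μ (K1CLM hσ₁ hσ₂ μ 1)‖ ≤ 2 * Real.exp (2 * r) *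
      (∫ t in (0:ℝ)..1, ‖σ₁ t‖) * ∫ u in (0:ℝ)..1, ‖σ₁ u‖ * gamma02 σ₂ μ u ^ 2 :=
  (ContinuousMap.norm_le_of_nonempty _).2 fun x => by
    rw [K1CLM_K1CLM_apply]
    exact norm_K1_K1_eFun_le hr hμ hσ₁ hσ₂ x.2

theorem hasNeumannSolution_K1 (hr : 0 ≤ r) (hμ : -r < μ.im)
    (hσ₁ : IntervalIntegrable σ₁ volume 0 1) (hσ₂ : IntervalIntegrable σ₂ volume 0 1) {P : ℝ}
    (hS₁ : ∫ t in (0:ℝ)..1, ‖σ₁ t‖ ≤ P) (hS₂ : ∫ t in (0:ℝ)..1, ‖σ₂ t‖ ≤ P)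
    (hsmall : 4 * Real.exp (4 * r) * P ^ 2 * ∫ u in (0:ℝ)..1, ‖σ₁ u‖ * gamma02 σ₂ μ u ≤ 1) :
    HasNeumannSolution (K1 σ₁ σ₂ μ) (4 * (1 + Real.exp (2 * r) * P ^ 2) * Real.exp (2 * r) * P *
      ∫ u in (0:ℝ)..1, ‖σ₁ u‖ * gamma02 σ₂ μ u ^ 2) := by
  set T := K1CLM hσ₁ hσ₂ μ
  set S₁ := ∫ t in (0:ℝ)..1, ‖σ₁ t‖
  set S₂ := ∫ t in (0:ℝ)..1, ‖σ₂ t‖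
  set H := ∫ u in (0:ℝ)..1, ‖σ₁ u‖ * gamma02 σ₂ μ u
  have hS₁0 : 0 ≤ S₁ := intervalIntegral.integral_nonneg zero_le_one fun _ _ => norm_nonneg _
  have hS₂0 : 0 ≤ S₂ := intervalIntegral.integral_nonneg zero_le_one fun _ _ => norm_nonneg _
  have hH0 : 0 ≤ H := intervalIntegral.integral_nonneg zero_le_one fun _ _ =>
    mul_nonneg (norm_nonneg _) gamma02_nonneg
  have hG0 : 0 ≤ ∫ u in (0:ℝ)..1, ‖σ₁ u‖ * gamma02 σ₂ μ u ^ 2 :=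
    intervalIntegral.integral_nonneg zero_le_one fun _ _ => by positivity
  have hP0 : 0 ≤ P := hS₁0.trans hS₁
  have hT (f) : ‖T (T f)‖ ≤ ‖f‖ / 2 := by
    have hc : 2 * Real.exp (2 * r) ^ 2 * S₁ * S₂ * H ≤ 1 / 2 := by
      calc 2 * Real.exp (2 * r) ^ 2 * S₁ * S₂ * H = 2 * Real.exp (4 * r) * (S₁ * S₂) * H := by
            rw [← Real.exp_nat_mul]
            ring_nf
        _ ≤ 2 * Real.exp (4 * r) * P ^ 2 * H := by
            rw [sq]
            gcongr
        _ ≤ 1 / 2 := by linarith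
    calc ‖T (T f)‖ ≤ 2 * Real.exp (2 * r) ^ 2 * S₁ * S₂ * H * ‖f‖ :=
          norm_K1CLM_K1CLM_le hr hμ hσ₁ hσ₂ f
      _ ≤ ‖f‖ / 2 := by nlinarith [norm_nonneg f]
  refine (hasNeumannSolution_of_continuousLinearMap T (fun _ _ => rfl) (fun _ _ => K1_congr)
    hT).mono ?_
  calc 2 * (1 + ‖T‖) * ‖T (T 1)‖
      ≤ 2 * (1 + Real.exp (2 * r) * P ^ 2) *
        (2 * Real.exp (2 * r) * P * ∫ u in (0:ℝ)..1, ‖σ₁ u‖ * gamma02 σ₂ μ u ^ 2) := by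
        gcongr
        · exact (norm_K1CLM_le hr hμ hσ₁ hσ₂).trans (by rw [mul_assoc, sq]; gcongr)
        · exact (norm_K1CLM_K1CLM_one_le hr hμ hσ₁ hσ₂).trans (by gcongr)
    _ = _ := by ring

end K1Estimates

theorem K2_eq_K1_reflect (σ₁ σ₂ z : ℝ → ℂ) (μ : ℂ) (x : ℝ) :
    K2 σ₁ σ₂ μ z x =
      K1 (fun t => σ₂ (1 - t)) (fun t => σ₁ (1 - t)) μ (fun t => z (1 - t)) (1 - x) := by
  rw [K2, intervalIntegral_eq_integral_one_sub _ x 1, sub_self, K1]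
  refine intervalIntegral.integral_congr fun t _ => ?_
  rw [intervalIntegral_eq_integral_one_sub _ 0 (1 - t), sub_sub_cancel, sub_zero]
  congr 1
  refine intervalIntegral.integral_congr fun s _ => ?_
  congr 3
  push_cast
  ring

theorem gamma02_reflect (σ : ℝ → ℂ) (μ : ℂ) (x : ℝ) :
    gamma02 (fun t => σ (1 - t)) μ x = gamma01 σ μ (1 - x) := by
  rw [gamma01, intervalIntegral_eq_integral_one_sub _ 0 (1 - x), sub_sub_cancel, sub_zero, gamma02]
  congr 1
  refine intervalIntegral.integral_congr fun t _ => ?_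
  congr 3
  push_cast
  ring

theorem continuousOn_gamma01 {σ : ℝ → ℂ} {μ : ℂ} (hσ : IntervalIntegrable σ volume 0 1) :
    ContinuousOn (gamma01 σ μ) (Icc 0 1) :=
  ((continuousOn_gamma02 (μ := μ) hσ.comp_one_sub).comp (by fun_prop) mapsTo_one_sub_Icc).congr
    fun x _ => by simp [gamma02_reflect]

theorem HasNeumannSolution.of_reflect {K K' : (ℝ → ℂ) → ℝ → ℂ} {B : ℝ}
    (hK : ∀ z x, K z x = K' (fun t => z (1 - t)) (1 - x)) (h : HasNeumannSolution K' B) :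
    HasNeumannSolution K B := by
  obtain ⟨hsum, hcont, heq, huniq, hasymp⟩ := h
  have hiter (n : ℕ) : ∀ z x, (K^[n] z) x = (K'^[n] fun t => z (1 - t)) (1 - x) := by
    induction n with
    | zero => simp
    | succ n ih =>
      intro z x
      simp only [Function.iterate_succ_apply', hK, ih, sub_sub_cancel]
  have hZ : neumannSum K = fun x => neumannSum K' (1 - x) :=
    funext fun x => by simp only [neumannSum, hiter]; rfl
  have hmaps := mapsTo_one_sub_Icc
  have hreflect : ContinuousOn (fun x : ℝ => 1 - x) (Icc 0 1) := by fun_prop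
  refine ⟨hsum.congr fun n => ?_, ?_, fun x hx => ?_, fun w hw hsol x hx => ?_, fun x hx => ?_⟩
  · simp only [hiter]
    exact (unitInterval.symm_bijective.surjective.iSup_comp fun y => ‖(K'^[n] eFun) y‖).symm
  · rw [hZ]
    exact hcont.comp hreflect hmaps
  · simp only [hZ, hK, sub_sub_cancel]
    exact heq (1 - x) (hmaps hx)
  · have hw' := huniq (fun t => w (1 - t)) (hw.comp hreflect hmaps) (fun y hy => by
      have := hsol (1 - y) (hmaps hy)
      rwa [hK, sub_sub_cancel] at this) (1 - x) (hmaps hx)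
    rw [sub_sub_cancel] at hw'
    rw [hZ, hw']
  · rw [hZ, hK]
    exact hasymp (1 - x) (hmaps hx)

theorem hasNeumannSolution_K2 {σ₁ σ₂ : ℝ → ℂ} {μ : ℂ} {r : ℝ} (hr : 0 ≤ r) (hμ : -r < μ.im)
    (hσ₁ : IntervalIntegrable σ₁ volume 0 1) (hσ₂ : IntervalIntegrable σ₂ volume 0 1) {P : ℝ}
    (hS₁ : ∫ t in (0:ℝ)..1, ‖σ₁ t‖ ≤ P) (hS₂ : ∫ t in (0:ℝ)..1, ‖σ₂ t‖ ≤ P)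
    (hsmall : 4 * Real.exp (4 * r) * P ^ 2 * ∫ u in (0:ℝ)..1, ‖σ₂ u‖ * gamma01 σ₁ μ u ≤ 1) :
    HasNeumannSolution (K2 σ₁ σ₂ μ) (4 * (1 + Real.exp (2 * r) * P ^ 2) * Real.exp (2 * r) * P *
      ∫ u in (0:ℝ)..1, ‖σ₂ u‖ * gamma01 σ₁ μ u ^ 2) := by
  have hS {σ : ℝ → ℂ} : ∫ t in (0:ℝ)..1, ‖σ (1 - t)‖ = ∫ t in (0:ℝ)..1, ‖σ t‖ :=
    integral_unitInterval_comp_one_sub fun t => ‖σ t‖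
  have hH : ∫ u in (0:ℝ)..1, ‖σ₂ (1 - u)‖ * gamma02 (fun t => σ₁ (1 - t)) μ u
      = ∫ u in (0:ℝ)..1, ‖σ₂ u‖ * gamma01 σ₁ μ u := by
    simp only [gamma02_reflect]
    exact integral_unitInterval_comp_one_sub fun u => ‖σ₂ u‖ * gamma01 σ₁ μ u
  have hG : ∫ u in (0:ℝ)..1, ‖σ₂ (1 - u)‖ * gamma02 (fun t => σ₁ (1 - t)) μ u ^ 2
      = ∫ u in (0:ℝ)..1, ‖σ₂ u‖ * gamma01 σ₁ μ u ^ 2 := by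
    simp only [gamma02_reflect]
    exact integral_unitInterval_comp_one_sub fun u => ‖σ₂ u‖ * gamma01 σ₁ μ u ^ 2
  refine .of_reflect (K2_eq_K1_reflect σ₁ σ₂ · μ ·) ?_
  have h := hasNeumannSolution_K1 hr hμ hσ₂.comp_one_sub hσ₁.comp_one_sub (hS.trans_le hS₂)
    (hS.trans_le hS₁) (by rwa [hH])
  rwa [hG] at h

theorem integral_mul_le_eLpNorm_mul_eLpNorm {α : Type*} [MeasurableSpace α] {ν : Measure α}
    {p q : ℝ≥0∞} (hpq : 1 / p + 1 / q = 1) {f g : α → ℝ} (hf : MemLp f p ν) (hg : MemLp g q ν) :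
    ∫ x, f x * g x ∂ν ≤ (eLpNorm f p ν).toReal * (eLpNorm g q ν).toReal := by
  have : ENNReal.HolderTriple p q 1 := ⟨by simpa [one_div] using hpq⟩
  have hHolder : eLpNorm (fun x => f x * g x) 1 ν ≤ eLpNorm f p ν * eLpNorm g q ν := by
    simpa using eLpNorm_le_eLpNorm_mul_eLpNorm'_of_norm hf.1 hg.1 (· * ·) 1
      (ae_of_all _ fun x => by simp [norm_mul])
  calc ∫ x, f x * g x ∂ν ≤ ∫ x, ‖f x * g x‖ ∂ν :=
        (Real.le_norm_self _).trans (norm_integral_le_integral_norm _)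
    _ = (eLpNorm (fun x => f x * g x) 1 ν).toReal := by
        rw [integral_norm_eq_lintegral_enorm (f := fun x => f x * g x) (hf.1.mul hg.1),
          eLpNorm_one_eq_lintegral_enorm]
    _ ≤ (eLpNorm f p ν * eLpNorm g q ν).toReal :=
        ENNReal.toReal_mono (ENNReal.mul_ne_top hf.2.ne hg.2.ne) hHolder
    _ = _ := ENNReal.toReal_mul

theorem integral_norm_mul_le_sigmaNorm_mul {p q : ℝ≥0∞} (hpq : 1 / p + 1 / q = 1)
    {σ₁ σ₂ f : ℝ → ℂ} (hσ₁ : MemLp σ₁ p (volume.restrict (Icc (0:ℝ) 1)))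
    (hσ₂ : MemLp σ₂ p (volume.restrict (Icc (0:ℝ) 1)))
    (hf : MemLp f p (volume.restrict (Icc (0:ℝ) 1))) (hfσ : ∀ x, ‖f x‖ ≤ max ‖σ₁ x‖ ‖σ₂ x‖)
    {g : ℝ → ℝ} (hg : MemLp g q (volume.restrict (Icc (0:ℝ) 1))) :
    ∫ u in (0:ℝ)..1, ‖f u‖ * g u
      ≤ sigmaNorm σ₁ σ₂ p * (eLpNorm g q (volume.restrict (Icc (0:ℝ) 1))).toReal := by
  rw [intervalIntegral.integral_of_le zero_le_one, ← integral_Icc_eq_integral_Ioc]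
  refine (integral_mul_le_eLpNorm_mul_eLpNorm hpq hf.norm hg).trans ?_
  gcongr
  rw [eLpNorm_norm]
  exact ENNReal.toReal_mono (hσ₁.norm.sup hσ₂.norm).2.ne (eLpNorm_mono_real fun x => hfσ x)

theorem integral_norm_le_sigmaNorm {p q : ℝ≥0∞} (hpq : 1 / p + 1 / q = 1) {σ₁ σ₂ f : ℝ → ℂ}
    (hσ₁ : MemLp σ₁ p (volume.restrict (Icc (0:ℝ) 1)))
    (hσ₂ : MemLp σ₂ p (volume.restrict (Icc (0:ℝ) 1)))
    (hf : MemLp f p (volume.restrict (Icc (0:ℝ) 1))) (hfσ : ∀ x, ‖f x‖ ≤ max ‖σ₁ x‖ ‖σ₂ x‖) :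
    ∫ u in (0:ℝ)..1, ‖f u‖ ≤ sigmaNorm σ₁ σ₂ p := by
  have h1 : (eLpNorm (fun _ => (1:ℝ)) q (volume.restrict (Icc (0:ℝ) 1))).toReal ≤ 1 := by
    have := eLpNorm_le_of_ae_bound (μ := volume.restrict (Icc (0:ℝ) 1)) (p := q)
      (f := fun _ : ℝ => (1:ℝ)) (C := 1) (ae_of_all _ fun _ => by simp)
    simp only [Measure.restrict_apply_univ, Real.volume_Icc, sub_zero, ENNReal.ofReal_one,
      ENNReal.one_rpow, one_mul] at this
    simpa using ENNReal.toReal_mono ENNReal.one_ne_top this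
  have h := integral_norm_mul_le_sigmaNorm_mul hpq hσ₁ hσ₂ hf hfσ (memLp_const (1:ℝ))
  simp only [mul_one] at h
  exact h.trans (mul_le_of_le_one_right ENNReal.toReal_nonneg h1)

theorem four_mul_exp_mul_le_one {r P γ H : ℝ} (hP : 0 ≤ P) (hH : H ≤ P * γ)
    (hγ : γ ≤ 1 / (2 * (2 * Real.exp (4 * r) * P ^ 3))) :
    4 * Real.exp (4 * r) * P ^ 2 * H ≤ 1 := by
  set a := 2 * Real.exp (4 * r) * P ^ 3
  have ha : 0 ≤ a := by positivity
  calc 4 * Real.exp (4 * r) * P ^ 2 * H ≤ 4 * Real.exp (4 * r) * P ^ 2 * (P * γ) := by gcongr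
    _ = 2 * a * γ := by ring
    _ ≤ 1 := by
        -- if `a = 0` then `1 / (2 * a) = 0`, but so is the left side
        rcases ha.eq_or_lt with h | h
        · simp [← h]
        · calc 2 * a * γ ≤ 2 * a * (1 / (2 * a)) := by gcongr
            _ = 1 := by field_simp

theorem memLp_of_continuousOn_Icc {q : ℝ≥0∞} {g : ℝ → ℝ}
    (hg : ContinuousOn g (Icc 0 1)) : MemLp g q (volume.restrict (Icc (0:ℝ) 1)) := by
  obtain ⟨C, hC⟩ := isCompact_Icc.exists_bound_of_continuousOn hg
  exact .of_bound (hg.aestronglyMeasurable measurableSet_Icc) C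
    ((ae_restrict_iff' measurableSet_Icc).2 (ae_of_all _ hC))

theorem stmt6_general
    (p q : ℝ≥0∞) (hp1 : 1 ≤ p) (hpq : 1/p + 1/q = 1)
    (σ₁ σ₂ : ℝ → ℂ)
    (hσ₁ : MemLp σ₁ p (volume.restrict (Icc (0:ℝ) 1)))
    (hσ₂ : MemLp σ₂ p (volume.restrict (Icc (0:ℝ) 1)))
    (r : ℝ) (hr : 0 ≤ r) :
    ∃ c > 0, ∀ μ : ℂ, -r < μ.im →
      gamma1 σ₁ q μ ≤ 1 / (2 * (2 * Real.exp (4*r) * (sigmaNorm σ₁ σ₂ p)^3)) →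
      gamma2 σ₂ q μ ≤ 1 / (2 * (2 * Real.exp (4*r) * (sigmaNorm σ₁ σ₂ p)^3)) →
      -- the series converges absolutely in the supremum norm
      (Summable (fun n : ℕ => ⨆ x : Icc (0:ℝ) 1, ‖((K1 σ₁ σ₂ μ)^[n] eFun) x‖))
      ∧ (Summable (fun n : ℕ => ⨆ x : Icc (0:ℝ) 1, ‖((K2 σ₁ σ₂ μ)^[n] eFun) x‖))
      -- the sum z₁ is continuous and solves z + K₁ z = 1
      ∧ ContinuousOn (fun x => ∑' n : ℕ, (-1:ℂ)^n * ((K1 σ₁ σ₂ μ)^[n] eFun) x) (Icc (0:ℝ) 1)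
      ∧ (∀ x ∈ Icc (0:ℝ) 1,
          (∑' n : ℕ, (-1:ℂ)^n * ((K1 σ₁ σ₂ μ)^[n] eFun) x)
            + K1 σ₁ σ₂ μ (fun y => ∑' n : ℕ, (-1:ℂ)^n * ((K1 σ₁ σ₂ μ)^[n] eFun) y) x = 1)
      -- z₁ is the unique continuous solution
      ∧ (∀ w : ℝ → ℂ, ContinuousOn w (Icc (0:ℝ) 1) →
          (∀ x ∈ Icc (0:ℝ) 1, w x + K1 σ₁ σ₂ μ w x = 1) →
          ∀ x ∈ Icc (0:ℝ) 1, w x = ∑' n : ℕ, (-1:ℂ)^n * ((K1 σ₁ σ₂ μ)^[n] eFun) x)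
      -- asymptotics of z₁
      ∧ (∀ x ∈ Icc (0:ℝ) 1,
          ‖(∑' n : ℕ, (-1:ℂ)^n * ((K1 σ₁ σ₂ μ)^[n] eFun) x) - 1 + K1 σ₁ σ₂ μ eFun x‖
            ≤ c * gammaT σ₁ σ₂ μ)
      -- the sum z₂ is continuous and solves z + K₂ z = 1
      ∧ ContinuousOn (fun x => ∑' n : ℕ, (-1:ℂ)^n * ((K2 σ₁ σ₂ μ)^[n] eFun) x) (Icc (0:ℝ) 1)
      ∧ (∀ x ∈ Icc (0:ℝ) 1,
          (∑' n : ℕ, (-1:ℂ)^n * ((K2 σ₁ σ₂ μ)^[n] eFun) x)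
            + K2 σ₁ σ₂ μ (fun y => ∑' n : ℕ, (-1:ℂ)^n * ((K2 σ₁ σ₂ μ)^[n] eFun) y) x = 1)
      -- z₂ is the unique continuous solution
      ∧ (∀ w : ℝ → ℂ, ContinuousOn w (Icc (0:ℝ) 1) →
          (∀ x ∈ Icc (0:ℝ) 1, w x + K2 σ₁ σ₂ μ w x = 1) →
          ∀ x ∈ Icc (0:ℝ) 1, w x = ∑' n : ℕ, (-1:ℂ)^n * ((K2 σ₁ σ₂ μ)^[n] eFun) x)
      -- asymptotics of z₂
      ∧ (∀ x ∈ Icc (0:ℝ) 1,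
          ‖(∑' n : ℕ, (-1:ℂ)^n * ((K2 σ₁ σ₂ μ)^[n] eFun) x) - 1 + K2 σ₁ σ₂ μ eFun x‖
            ≤ c * gammaT σ₁ σ₂ μ) := by
  set P := sigmaNorm σ₁ σ₂ p
  have hP : 0 ≤ P := ENNReal.toReal_nonneg
  have hi₁ : IntervalIntegrable σ₁ volume 0 1 :=
    (intervalIntegrable_iff_integrableOn_Icc_of_le zero_le_one).2 (hσ₁.integrable hp1)
  have hi₂ : IntervalIntegrable σ₂ volume 0 1 :=
    (intervalIntegrable_iff_integrableOn_Icc_of_le zero_le_one).2 (hσ₂.integrable hp1)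
  have hS₁ := integral_norm_le_sigmaNorm hpq hσ₁ hσ₂ hσ₁ fun x => le_max_left _ _
  have hS₂ := integral_norm_le_sigmaNorm hpq hσ₁ hσ₂ hσ₂ fun x => le_max_right _ _
  refine ⟨4 * (1 + Real.exp (2 * r) * P ^ 2) * Real.exp (2 * r) * (P + 1), by positivity,
    fun μ hμ hγ₁ hγ₂ => ?_⟩
  have hH₁ := integral_norm_mul_le_sigmaNorm_mul hpq hσ₁ hσ₂ hσ₁ (fun x => le_max_left _ _)
    (memLp_of_continuousOn_Icc (continuousOn_gamma02 (μ := μ) hi₂))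
  have hH₂ := integral_norm_mul_le_sigmaNorm_mul hpq hσ₁ hσ₂ hσ₂ (fun x => le_max_right _ _)
    (memLp_of_continuousOn_Icc (continuousOn_gamma01 (μ := μ) hi₁))
  have hG₁ : 0 ≤ ∫ u in (0:ℝ)..1, ‖σ₂ u‖ * gamma01 σ₁ μ u ^ 2 :=
    intervalIntegral.integral_nonneg zero_le_one fun _ _ => by positivity
  have hG₂ : 0 ≤ ∫ u in (0:ℝ)..1, ‖σ₁ u‖ * gamma02 σ₂ μ u ^ 2 :=
    intervalIntegral.integral_nonneg zero_le_one fun _ _ => by positivity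
  have hG (G : ℝ) (hG0 : 0 ≤ G) (hG : G ≤ gammaT σ₁ σ₂ μ) :
      4 * (1 + Real.exp (2 * r) * P ^ 2) * Real.exp (2 * r) * P * G
        ≤ 4 * (1 + Real.exp (2 * r) * P ^ 2) * Real.exp (2 * r) * (P + 1) * gammaT σ₁ σ₂ μ :=
    mul_le_mul (by gcongr; linarith) hG hG0 (by positivity)
  obtain ⟨hs₁, hc₁, he₁, hu₁, ha₁⟩ := (hasNeumannSolution_K1 hr hμ hi₁ hi₂ hS₁ hS₂
    (four_mul_exp_mul_le_one hP hH₁ hγ₂)).mono (hG _ hG₂ (le_add_of_nonneg_left hG₁))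
  obtain ⟨hs₂, hc₂, he₂, hu₂, ha₂⟩ := (hasNeumannSolution_K2 hr hμ hi₁ hi₂ hS₁ hS₂
    (four_mul_exp_mul_le_one hP hH₂ hγ₁)).mono (hG _ hG₁ (le_add_of_nonneg_right hG₂))
  exact ⟨hs₁, hs₂, hc₁, he₁, hu₁, ha₁, hc₂, he₂, hu₂, ha₂⟩

/-- the Neumann series solution of `z + K_j z = 1` and its first-order asymptotics. -/
theorem stmt6
    (p q : ℝ≥0∞) (hp1 : 1 ≤ p) (hp2 : p < 2) (hpq : 1/p + 1/q = 1)
    (σ₁ σ₂ : ℝ → ℂ) (hσ₁m : Measurable σ₁) (hσ₂m : Measurable σ₂)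
    (hσ₁ : MemLp σ₁ p (volume.restrict (Icc (0:ℝ) 1)))
    (hσ₂ : MemLp σ₂ p (volume.restrict (Icc (0:ℝ) 1)))
    (r : ℝ) (hr : 0 ≤ r) :
    ∃ c > 0, ∀ μ : ℂ, -r < μ.im →
      gamma1 σ₁ q μ ≤ 1 / (2 * (2 * Real.exp (4*r) * (sigmaNorm σ₁ σ₂ p)^3)) →
      gamma2 σ₂ q μ ≤ 1 / (2 * (2 * Real.exp (4*r) * (sigmaNorm σ₁ σ₂ p)^3)) →
      -- the series converges absolutely in the supremum norm
      (Summable (fun n : ℕ => ⨆ x : Icc (0:ℝ) 1, ‖((K1 σ₁ σ₂ μ)^[n] eFun) x‖))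
      ∧ (Summable (fun n : ℕ => ⨆ x : Icc (0:ℝ) 1, ‖((K2 σ₁ σ₂ μ)^[n] eFun) x‖))
      -- the sum z₁ is continuous and solves z + K₁ z = 1
      ∧ ContinuousOn (fun x => ∑' n : ℕ, (-1:ℂ)^n * ((K1 σ₁ σ₂ μ)^[n] eFun) x) (Icc (0:ℝ) 1)
      ∧ (∀ x ∈ Icc (0:ℝ) 1,
          (∑' n : ℕ, (-1:ℂ)^n * ((K1 σ₁ σ₂ μ)^[n] eFun) x)
            + K1 σ₁ σ₂ μ (fun y => ∑' n : ℕ, (-1:ℂ)^n * ((K1 σ₁ σ₂ μ)^[n] eFun) y) x = 1)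
      -- z₁ is the unique continuous solution
      ∧ (∀ w : ℝ → ℂ, ContinuousOn w (Icc (0:ℝ) 1) →
          (∀ x ∈ Icc (0:ℝ) 1, w x + K1 σ₁ σ₂ μ w x = 1) →
          ∀ x ∈ Icc (0:ℝ) 1, w x = ∑' n : ℕ, (-1:ℂ)^n * ((K1 σ₁ σ₂ μ)^[n] eFun) x)
      -- asymptotics of z₁
      ∧ (∀ x ∈ Icc (0:ℝ) 1,
          ‖(∑' n : ℕ, (-1:ℂ)^n * ((K1 σ₁ σ₂ μ)^[n] eFun) x) - 1 + K1 σ₁ σ₂ μ eFun x‖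
            ≤ c * gammaT σ₁ σ₂ μ)
      -- the sum z₂ is continuous and solves z + K₂ z = 1
      ∧ ContinuousOn (fun x => ∑' n : ℕ, (-1:ℂ)^n * ((K2 σ₁ σ₂ μ)^[n] eFun) x) (Icc (0:ℝ) 1)
      ∧ (∀ x ∈ Icc (0:ℝ) 1,
          (∑' n : ℕ, (-1:ℂ)^n * ((K2 σ₁ σ₂ μ)^[n] eFun) x)
            + K2 σ₁ σ₂ μ (fun y => ∑' n : ℕ, (-1:ℂ)^n * ((K2 σ₁ σ₂ μ)^[n] eFun) y) x = 1)
      -- z₂ is the unique continuous solution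
      ∧ (∀ w : ℝ → ℂ, ContinuousOn w (Icc (0:ℝ) 1) →
          (∀ x ∈ Icc (0:ℝ) 1, w x + K2 σ₁ σ₂ μ w x = 1) →
          ∀ x ∈ Icc (0:ℝ) 1, w x = ∑' n : ℕ, (-1:ℂ)^n * ((K2 σ₁ σ₂ μ)^[n] eFun) x)
      -- asymptotics of z₂
      ∧ (∀ x ∈ Icc (0:ℝ) 1,
          ‖(∑' n : ℕ, (-1:ℂ)^n * ((K2 σ₁ σ₂ μ)^[n] eFun) x) - 1 + K2 σ₁ σ₂ μ eFun x‖
            ≤ c * gammaT σ₁ σ₂ μ) :=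
  stmt6_general p q hp1 hpq σ₁ σ₂ hσ₁ hσ₂ r hr
end
end
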